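/- arXiv:1408.3350 — 2 statements merged into one kernel-verified Lean document; each statement's English description precedes it below -/
import Mathlib

section
/- Let d ≥ 1 and let n = (n_1,…,n_d) and m = (m_1,…,m_d) be tuples of integers satisfying: −d ≤ n_1 ≤ … ≤ n_d, 0 ≤ m_1 ≤ … ≤ m_d, n_{i+1} − n_i ≤ 1 and m_{i+1} − m_i ≤ 1 for all 1 ≤ i ≤ d−1. Then d² + Σ_{i=1}^{d}(m_i + n_i) ≥ 0. Moreover, if d² + Σ_{i=1}^{d}(m_i + n_i) > 0, then at least one of the following holds: (i) there exists 1 ≤ i_0 ≤ d such that the tuple m' obtained from m by replacing m_{i_0} with m_{i_0} − 1 still satisfies all the above constraints; or (ii) there exists 1 ≤ i_0 ≤ d such that the tuple n' obtained from n by replacing n_{i_0} with n_{i_0} − 1 still satisfies all the above constraints. -/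
/-! The sum of `m_i + n_i` is at least `d · (0 - d) = -d²`, with equality only when every entry
sits at its lower bound. Otherwise some entry of `m` or of `n` exceeds its bound, and in such a
tuple the first entry of the final plateau can be lowered by one: the entry before it is strictly
smaller (or is the lower bound itself), and the entry after it is equal. -/

/-- A tuple (b_1,…,b_d) satisfies the constraints with lower bound `lo`:
lo ≤ b_1, b_i ≤ b_{i+1} and b_{i+1} − b_i ≤ 1 for 1 ≤ i ≤ d−1. -/
def OkTuple (d : ℕ) (lo : ℤ) (b : ℕ → ℤ) : Prop :=
  lo ≤ b 1 ∧ ∀ i, 1 ≤ i → i < d → b i ≤ b (i + 1) ∧ b (i + 1) - b i ≤ 1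

namespace OkTuple

variable {d : ℕ} {lo : ℤ} {b : ℕ → ℤ}

theorem monotoneOn (h : OkTuple d lo b) : MonotoneOn b (Set.Icc 1 d) :=
  monotoneOn_of_le_succ Set.ordConnected_Icc fun i _ hi hi' =>
    (h.2 i hi.1 (Nat.lt_of_succ_le hi'.2)).1

theorem lo_le (h : OkTuple d lo b) {i : ℕ} (hi : i ∈ Finset.Icc 1 d) : lo ≤ b i := by
  rw [Finset.mem_Icc] at hi
  exact h.1.trans (h.monotoneOn ⟨le_rfl, hi.1.trans hi.2⟩ ⟨hi.1, hi.2⟩ hi.1)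

theorem update_sub_one (h : OkTuple d lo b) {i0 : ℕ} (hfirst : i0 = 1 → lo < b 1)
    (hprev : 1 < i0 → b (i0 - 1) < b i0) (hnext : i0 < d → b (i0 + 1) ≤ b i0) :
    OkTuple d lo (Function.update b i0 (b i0 - 1)) := by
  refine ⟨?_, fun i hi hid => ?_⟩
  · rcases eq_or_ne i0 1 with rfl | hne
    · simpa using hfirst rfl
    · simpa [Function.update_of_ne (Ne.symm hne)] using h.1
  · have hstep := h.2 i hi hid
    rcases lt_trichotomy i i0 with hlt | rfl | hgt
    · rcases eq_or_ne (i + 1) i0 with rfl | hne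
      · have := hprev (by omega)
        simp only [Function.update_self, Function.update_of_ne (by omega : i ≠ i + 1)]
        simp only [Nat.add_sub_cancel] at this
        omega
      · simpa [Function.update_of_ne hlt.ne, Function.update_of_ne hne] using hstep
    · have := hnext hid
      simp only [Function.update_self, Function.update_of_ne (by omega : i + 1 ≠ i)]
      omega
    · simpa [Function.update_of_ne hgt.ne', Function.update_of_ne (by omega : i + 1 ≠ i0)]
        using hstep

theorem exists_update_sub_one (h : OkTuple d lo b) {i : ℕ} (hi : i ∈ Finset.Icc 1 d)
    (hlt : lo < b i) :
    ∃ i0, 1 ≤ i0 ∧ i0 ≤ d ∧ OkTuple d lo (Function.update b i0 (b i0 - 1)) := by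
  rw [Finset.mem_Icc] at hi
  have hplateau : ∃ j, 1 ≤ j ∧ b j = b d := ⟨d, hi.1.trans hi.2, rfl⟩
  classical
  set i0 := Nat.find hplateau
  obtain ⟨hi0, hi0d⟩ : 1 ≤ i0 ∧ b i0 = b d := Nat.find_spec hplateau
  have hi0_le : i0 ≤ d := Nat.find_min' hplateau ⟨hi.1.trans hi.2, rfl⟩
  have hmono := h.monotoneOn
  refine ⟨i0, hi0, hi0_le, h.update_sub_one (fun h1 => ?_) (fun h1 => ?_) (fun hd => ?_)⟩
  · rw [← h1, hi0d]
    exact hlt.trans_le (hmono ⟨hi.1, hi.2⟩ ⟨hi.1.trans hi.2, le_rfl⟩ hi.2)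
  · have hne : b (i0 - 1) ≠ b d := fun heq =>
      Nat.find_min hplateau (by omega) ⟨by omega, heq⟩
    have hle : b (i0 - 1) ≤ b i0 := hmono ⟨by omega, by omega⟩ ⟨hi0, hi0_le⟩ (by omega)
    rw [hi0d] at hle ⊢
    exact lt_of_le_of_ne hle hne
  · rw [hi0d]
    exact hmono ⟨by omega, hd⟩ ⟨hi.1.trans hi.2, le_rfl⟩ hd

end OkTuple

theorem stmt_6_general (d : ℕ) (n m : ℕ → ℤ)
    (hn : OkTuple d (-(d : ℤ)) n) (hm : OkTuple d 0 m) :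
    0 ≤ (d : ℤ) ^ 2 + ∑ i ∈ Finset.Icc 1 d, (m i + n i) ∧
    (0 < (d : ℤ) ^ 2 + ∑ i ∈ Finset.Icc 1 d, (m i + n i) →
      (∃ i0, 1 ≤ i0 ∧ i0 ≤ d ∧ OkTuple d 0 (Function.update m i0 (m i0 - 1))) ∨
      (∃ i0, 1 ≤ i0 ∧ i0 ≤ d ∧
        OkTuple d (-(d : ℤ)) (Function.update n i0 (n i0 - 1)))) := by
  have hbound : ∑ i ∈ Finset.Icc 1 d, ((0 : ℤ) + -d) = -(d : ℤ) ^ 2 := by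
    simp only [zero_add, Finset.sum_const, Nat.card_Icc, add_tsub_cancel_right, nsmul_eq_mul]
    ring
  have hlow : ∀ i ∈ Finset.Icc 1 d, (0 : ℤ) + -d ≤ m i + n i :=
    fun i hi => add_le_add (hm.lo_le hi) (hn.lo_le hi)
  refine ⟨by linarith [Finset.sum_le_sum hlow], fun hpos => ?_⟩
  obtain ⟨i, hi, hlt⟩ := Finset.exists_lt_of_sum_lt (s := Finset.Icc 1 d)
    (f := fun _ => (0 : ℤ) + -d) (g := fun i => m i + n i) (by linarith)
  rcases lt_or_ge 0 (m i) with hmi | hmi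
  · exact Or.inl (hm.exists_update_sub_one hi hmi)
  · exact Or.inr (hn.exists_update_sub_one hi (by linarith))

/-- d² + Σ(m_i + n_i) ≥ 0, and if > 0 then some m_{i_0} or some
n_{i_0} can be decreased by 1 keeping all constraints. -/
theorem stmt_6 (d : ℕ) (hd : 1 ≤ d) (n m : ℕ → ℤ)
    (hn : OkTuple d (-(d : ℤ)) n) (hm : OkTuple d 0 m) :
    0 ≤ (d : ℤ) ^ 2 + ∑ i ∈ Finset.Icc 1 d, (m i + n i) ∧
    (0 < (d : ℤ) ^ 2 + ∑ i ∈ Finset.Icc 1 d, (m i + n i) →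
      (∃ i0, 1 ≤ i0 ∧ i0 ≤ d ∧ OkTuple d 0 (Function.update m i0 (m i0 - 1))) ∨
      (∃ i0, 1 ≤ i0 ∧ i0 ≤ d ∧
        OkTuple d (-(d : ℤ)) (Function.update n i0 (n i0 - 1)))) :=
  stmt_6_general d n m hn hm
end

section
/- Let 𝔽_q be a finite field, j ≥ 1, and P_j = ∏_{(a_0,…,a_{j−1}) ∈ 𝔽_q^j} (X_j + a_{j−1}X_{j−1} + … + a_1X_1 + a_0) ∈ 𝔽_q[X_1,…,X_j]. Then for any nonzero scalars c_1,…,c_j ∈ 𝔽_q^×, we have P_j(c_1X_1, …, c_jX_j) = c_j · P_j(X_1,…,X_j). -/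
/-!
Substituting `X_v ↦ c_v X_v` sends the factor of `P_j` indexed by `a` to `c_j` times the factor
indexed by the componentwise rescaling `a * d`, where `d_0 = c_j⁻¹` and `d_{i+1} = c_{i+1} / c_j`.
Rescaling by the nowhere-zero `d` permutes `𝔽_q^j`, so the substituted product is
`c_j ^ (q ^ j) • P_j = c_j • P_j`.
-/

open MvPolynomial

variable {F : Type*} [Field F] {m : ℕ}

/-- The factor of `P_j` indexed by `a`; the variable `X i` stands for `X_{i+1}`. -/
noncomputable def linearFactor (a : Fin (m + 1) → F) : MvPolynomial (Fin (m + 1)) F :=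
  X (Fin.last m) + ∑ i : Fin m, C (a i.succ) * X i.castSucc + C (a 0)

noncomputable def coeffScale (c : Fin (m + 1) → F) : Fin (m + 1) → F :=
  Fin.cases (c (Fin.last m))⁻¹ fun i => c i.castSucc / c (Fin.last m)

theorem coeffScale_ne_zero {c : Fin (m + 1) → F} (hc : ∀ v, c v ≠ 0) (v : Fin (m + 1)) :
    coeffScale c v ≠ 0 := by
  cases v using Fin.cases with
  | zero => simpa [coeffScale] using hc _
  | succ i => simpa [coeffScale] using ⟨hc _, hc _⟩

theorem bind₁_C_mul_X_linearFactor {c : Fin (m + 1) → F} (hc : c (Fin.last m) ≠ 0)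
    (a : Fin (m + 1) → F) :
    bind₁ (fun v => C (c v) * X v) (linearFactor a) =
      C (c (Fin.last m)) * linearFactor (a * coeffScale c) := by
  simp only [linearFactor, map_add, map_sum, map_mul, bind₁_X_right, bind₁_C_right]
  simp only [mul_add, Finset.mul_sum, Pi.mul_apply, coeffScale, Fin.cases_succ, Fin.cases_zero,
    ← mul_assoc, ← map_mul]
  congr 3
  · ext i
    congr 2
    field_simp
  · field_simp

theorem Fintype.prod_comp_mul_right₀ {ι M : Type*} [Fintype ι] [DecidableEq ι] [Fintype F]
    [CommMonoid M] {d : ι → F} (hd : ∀ i, d i ≠ 0) (f : (ι → F) → M) :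
    ∏ a, f (a * d) = ∏ a, f a :=
  Equiv.prod_comp (Equiv.piCongrRight fun i => Equiv.mulRight₀ (d i) (hd i)) f

/-- with j = m+1 variables (variable `i : Fin (m+1)` standing for
X_{i+1}), for nonzero scalars c_1,…,c_j one has
P_j(c_1X_1,…,c_jX_j) = c_j · P_j. -/
theorem stmt_10 (F : Type) [Field F] [Fintype F] (m : ℕ)
    (c : Fin (m + 1) → F) (hc : ∀ v, c v ≠ 0) :
    let P : MvPolynomial (Fin (m + 1)) F :=
      ∏ a : Fin (m + 1) → F,
        (X (Fin.last m) + ∑ i : Fin m, C (a i.succ) * X i.castSucc + C (a 0))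
    MvPolynomial.bind₁ (fun v : Fin (m + 1) => C (c v) * X v) P =
      C (c (Fin.last m)) * P := by
  change bind₁ _ (∏ a, linearFactor a) = C _ * ∏ a, linearFactor a
  calc bind₁ (fun v => C (c v) * X v) (∏ a, linearFactor a)
      = ∏ a, C (c (Fin.last m)) * linearFactor (a * coeffScale c) := by
        rw [map_prod]
        exact Finset.prod_congr rfl fun a _ => bind₁_C_mul_X_linearFactor (hc _) a
    _ = C (c (Fin.last m)) ^ Fintype.card (Fin (m + 1) → F) * ∏ a, linearFactor a := by
        rw [Finset.prod_mul_distrib, Finset.prod_const, Finset.card_univ,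
          Fintype.prod_comp_mul_right₀ (coeffScale_ne_zero hc)]
    _ = C (c (Fin.last m)) * ∏ a, linearFactor a := by
        rw [← map_pow, Fintype.card_fun, Fintype.card_fin, FiniteField.pow_card_pow]
end
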